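/- Commutator expansion with remainder bound (bounded operator version): Let H be a complex Hilbert space, let A, B be bounded linear operators on H with A self-adjoint, and define ad_A⁰(B) := B and ad_A^{k}(B) := [ad_A^{k−1}(B), A], where [X,Y] = XY − YX. Let n ≥ 1 and let g : ℝ → ℂ be measurable with ∫_ℝ |g(s)|(1+|s|ⁿ) ds < ∞. Set T := ∫_ℝ g(s) e^{isA} ds and, for 1 ≤ k ≤ n−1, T_k := ∫_ℝ g(s) (is)^k e^{isA} ds (Bochner integrals of bounded operators, e^{isA} being the unitary group of A). Then [B, T] = Σ_{k=1}^{n−1} (1/k!) · T_k ∘ ad_A^{k}(B) + R_n, where the remainder satisfies the operator-norm bound ‖R_n‖ ≤ (1/n!) · ‖ad_A^{n}(B)‖ · ∫_ℝ |g(s)| |s|ⁿ ds. -/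

import Mathlib

noncomputable section

open MeasureTheory

/-- Iterated commutator: `adIter A B 0 = B`, `adIter A B (k+1) = [adIter A B k, A]`. -/
def adIter {H : Type*} [NormedAddCommGroup H] [InnerProductSpace ℂ H]
    (A B : H →L[ℂ] H) : ℕ → H →L[ℂ] H
  | 0 => B
  | k + 1 => adIter A B k * A - A * adIter A B k

/-- `e^{isA}`, the exponential of the bounded operator `isA`. -/
def expUnit {H : Type*} [NormedAddCommGroup H] [InnerProductSpace ℂ H] [CompleteSpace H]
    (A : H →L[ℂ] H) (s : ℝ) : H →L[ℂ] H :=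
  NormedSpace.exp (((s : ℂ) * Complex.I) • A)

/-! The conjugated operator `φ(s) = e^{-isA} B e^{isA}` has `k`-th derivative
`i^k e^{-isA} ad_A^k(B) e^{isA}`, of norm `‖ad_A^k(B)‖` because `e^{isA}` is unitary. Taylor's
formula to order `n` for `φ`, multiplied on the left by `e^{isA}`, expands `[B, e^{isA}]` with a
remainder of norm at most `‖ad_A^n(B)‖ |s|^n / n!`; integrating against `g` gives the theorem.
If `s ↦ g(s) e^{isA}` is not a.e. strongly measurable, all the Bochner integrals in the statement
are `0` by convention and the bound is trivial. -/

open scoped Nat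
open Complex (I)

section Taylor

variable {E : Type*} [NormedAddCommGroup E] [NormedSpace ℝ E]

theorem hasDerivAt_pow_succ_div_factorial (n : ℕ) (t : ℝ) :
    HasDerivAt (fun t : ℝ => t ^ (n + 1) / (n + 1)!) (t ^ n / n !) t := by
  refine ((hasDerivAt_pow (n + 1) t).div_const _).congr_deriv ?_
  rw [Nat.factorial_succ, Nat.add_sub_cancel]
  push_cast
  field_simp

theorem hasDerivAt_sum_range_pow_div_factorial_smul (c : ℕ → E) (n : ℕ) (t : ℝ) :
    HasDerivAt (fun t : ℝ => ∑ k ∈ Finset.range (n + 1), (t ^ k / k !) • c k)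
      (∑ k ∈ Finset.range n, (t ^ k / k !) • c (k + 1)) t := by
  induction n with
  | zero => simpa using hasDerivAt_const t (c 0)
  | succ n ih =>
    have h := ih.fun_add ((hasDerivAt_pow_succ_div_factorial n t).smul_const (c (n + 1)))
    rw [← Finset.sum_range_succ (fun k => (t ^ k / k !) • c (k + 1))] at h
    simpa only [← Finset.sum_range_succ] using h

theorem norm_le_of_hasDerivAt_of_norm_deriv_le_pow_of_nonneg {r r' : ℝ → E}
    (hr : ∀ t, HasDerivAt r (r' t) t) (h0 : r 0 = 0) {C : ℝ} {m : ℕ}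
    (hr' : ∀ t, ‖r' t‖ ≤ C * |t| ^ m / m !) {s : ℝ} (hs : 0 ≤ s) :
    ‖r s‖ ≤ C * s ^ (m + 1) / (m + 1)! := by
  have hbound (t : ℝ) :
      HasDerivAt (fun t : ℝ => C * t ^ (m + 1) / (m + 1)!) (C * t ^ m / m !) t := by
    simpa only [mul_div_assoc] using (hasDerivAt_pow_succ_div_factorial m t).const_mul C
  refine image_norm_le_of_norm_deriv_right_le_deriv_boundary
    (fun t _ => (hr t).continuousAt.continuousWithinAt) (fun t _ => (hr t).hasDerivWithinAt)
    (by simp [h0]) hbound (fun t ht => ?_) ⟨hs, le_rfl⟩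
  simpa only [abs_of_nonneg ht.1] using hr' t

theorem norm_le_of_hasDerivAt_of_norm_deriv_le_pow {r r' : ℝ → E}
    (hr : ∀ t, HasDerivAt r (r' t) t) (h0 : r 0 = 0) {C : ℝ} {m : ℕ}
    (hr' : ∀ t, ‖r' t‖ ≤ C * |t| ^ m / m !) (s : ℝ) :
    ‖r s‖ ≤ C * |s| ^ (m + 1) / (m + 1)! := by
  rcases le_or_gt 0 s with hs | hs
  · rw [abs_of_nonneg hs]
    exact norm_le_of_hasDerivAt_of_norm_deriv_le_pow_of_nonneg hr h0 hr' hs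
  · have hr_neg (t : ℝ) : HasDerivAt (fun t => r (-t)) (-r' (-t)) t := by
      simpa [Function.comp_def] using (hr (-t)).scomp t (hasDerivAt_neg t)
    have := norm_le_of_hasDerivAt_of_norm_deriv_le_pow_of_nonneg hr_neg (by simpa using h0)
      (fun t => by simpa using hr' (-t)) (neg_nonneg.2 hs.le)
    simpa [abs_of_neg hs] using this

theorem norm_sub_sum_range_le_of_hasDerivAt {n : ℕ} {f : ℕ → ℝ → E}
    (hf : ∀ k < n, ∀ t, HasDerivAt (f k) (f (k + 1) t) t) {C : ℝ} (hC : ∀ t, ‖f n t‖ ≤ C)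
    (s : ℝ) : ‖f 0 s - ∑ k ∈ Finset.range n, (s ^ k / k !) • f k 0‖ ≤ C * |s| ^ n / n ! := by
  induction n generalizing f s with
  | zero => simpa using hC s
  | succ n ih =>
    have hr (t : ℝ) :
        HasDerivAt (fun t => f 0 t - ∑ k ∈ Finset.range (n + 1), (t ^ k / k !) • f k 0)
        (f 1 t - ∑ k ∈ Finset.range n, (t ^ k / k !) • f (k + 1) 0) t :=
      (hf 0 n.succ_pos t).sub (hasDerivAt_sum_range_pow_div_factorial_smul (fun k => f k 0) n t)
    exact norm_le_of_hasDerivAt_of_norm_deriv_le_pow hr (by simp [Finset.sum_range_succ'])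
      (ih (fun k hk => hf (k + 1) (by omega)) hC) s

end Taylor

section UnitaryGroup

variable {H : Type*} [NormedAddCommGroup H] [InnerProductSpace ℂ H] [CompleteSpace H]
  (A : H →L[ℂ] H)

theorem expUnit_eq_exp_real_smul (s : ℝ) : expUnit A s = NormedSpace.exp (s • (I • A)) := by
  rw [expUnit, ← smul_assoc, Complex.real_smul]

theorem hasDerivAt_expUnit (s : ℝ) :
    HasDerivAt (expUnit A) (expUnit A s * (I • A)) s := by
  simp only [funext (expUnit_eq_exp_real_smul A)]
  exact hasDerivAt_exp_smul_const (I • A) s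

theorem expUnit_zero : expUnit A 0 = 1 := by
  simp [expUnit]

theorem expUnit_add (s t : ℝ) : expUnit A (s + t) = expUnit A s * expUnit A t := by
  let +nondep : NormedAlgebra ℚ (H →L[ℂ] H) := .restrictScalars ℚ ℂ _
  simp only [expUnit_eq_exp_real_smul, add_smul]
  exact NormedSpace.exp_add_of_commute (((Commute.refl _).smul_left _).smul_right _)

theorem expUnit_mul_expUnit_neg (s : ℝ) : expUnit A s * expUnit A (-s) = 1 := by
  rw [← expUnit_add, add_neg_cancel, expUnit_zero]

theorem commute_expUnit (s : ℝ) : Commute A (expUnit A s) :=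
  ((Commute.refl A).smul_right _).exp_right

variable {A}

theorem IsSelfAdjoint.expUnit_mem_unitary (hA : IsSelfAdjoint A) (s : ℝ) :
    expUnit A s ∈ unitary (H →L[ℂ] H) := by
  let +nondep : NormedAlgebra ℚ (H →L[ℂ] H) := .restrictScalars ℚ ℂ _
  exact NormedSpace.exp_mem_unitary_of_mem_skewAdjoint <| hA.smul_mem_skewAdjoint <| by
    simp [skewAdjoint.mem_iff]

theorem IsSelfAdjoint.norm_expUnit_le_one (hA : IsSelfAdjoint A) (s : ℝ) :
    ‖expUnit A s‖ ≤ 1 := by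
  rw [← mul_one (expUnit A s), CStarRing.norm_mem_unitary_mul _ (hA.expUnit_mem_unitary s)]
  exact ContinuousLinearMap.norm_id_le

end UnitaryGroup

section Expansion

variable {H : Type*} [NormedAddCommGroup H] [InnerProductSpace ℂ H] [CompleteSpace H]
  (A B : H →L[ℂ] H)

def conjAdIter (k : ℕ) (s : ℝ) : H →L[ℂ] H :=
  I ^ k • (expUnit A (-s) * adIter A B k * expUnit A s)

theorem conjAdIter_apply_zero (k : ℕ) : conjAdIter A B k 0 = I ^ k • adIter A B k := by
  simp [conjAdIter, expUnit_zero]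

theorem hasDerivAt_conjAdIter (k : ℕ) (s : ℝ) :
    HasDerivAt (conjAdIter A B k) (conjAdIter A B (k + 1) s) s := by
  have hneg : HasDerivAt (fun t => expUnit A (-t)) (-(expUnit A (-s) * (I • A))) s := by
    simpa [Function.comp_def] using (hasDerivAt_expUnit A (-s)).scomp s (hasDerivAt_neg s)
  refine (((hneg.mul_const (adIter A B k)).mul (hasDerivAt_expUnit A s)).const_smul
    (I ^ k)).congr_deriv ?_
  rw [← ((commute_expUnit A s).smul_left I).eq, conjAdIter, pow_succ, mul_smul, adIter]
  congr 1
  simp only [smul_mul_assoc, mul_smul_comm, neg_mul, mul_sub, sub_mul, smul_sub, mul_assoc]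
  abel

variable {A}

theorem IsSelfAdjoint.norm_conjAdIter (hA : IsSelfAdjoint A) (k : ℕ) (s : ℝ) :
    ‖conjAdIter A B k s‖ = ‖adIter A B k‖ := by
  rw [conjAdIter, norm_smul, norm_pow, Complex.norm_I, one_pow, one_mul,
    CStarRing.norm_mul_mem_unitary _ (hA.expUnit_mem_unitary s),
    CStarRing.norm_mem_unitary_mul _ (hA.expUnit_mem_unitary (-s))]

theorem IsSelfAdjoint.norm_commutator_expUnit_sub_sum_le (hA : IsSelfAdjoint A)
    {n : ℕ} (hn : 1 ≤ n) (s : ℝ) :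
    ‖B * expUnit A s - expUnit A s * B - ∑ k ∈ Finset.Ico 1 n,
        (k ! : ℂ)⁻¹ • (((I * s) ^ k • expUnit A s) * adIter A B k)‖ ≤
      ‖adIter A B n‖ * |s| ^ n / n ! := by
  have htaylor := norm_sub_sum_range_le_of_hasDerivAt (fun k _ t => hasDerivAt_conjAdIter A B k t)
    (fun t => (hA.norm_conjAdIter B n t).le) s
  have hterm (k : ℕ) : expUnit A s * ((s ^ k / k ! : ℝ) • conjAdIter A B k 0) =
      (k ! : ℂ)⁻¹ • (((I * s) ^ k • expUnit A s) * adIter A B k) := by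
    rw [conjAdIter_apply_zero, ← Complex.coe_smul, mul_smul_comm, mul_smul_comm, smul_mul_assoc,
      smul_smul, smul_smul]
    congr 1
    push_cast
    ring
  have hleading : expUnit A s * conjAdIter A B 0 s = B * expUnit A s := by
    rw [conjAdIter, pow_zero, one_smul, ← mul_assoc, ← mul_assoc, expUnit_mul_expUnit_neg, one_mul,
      adIter]
  have hexpand : expUnit A s * (conjAdIter A B 0 s -
      ∑ k ∈ Finset.range n, (s ^ k / k ! : ℝ) • conjAdIter A B k 0) =
      B * expUnit A s - expUnit A s * B - ∑ k ∈ Finset.Ico 1 n,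
        (k ! : ℂ)⁻¹ • (((I * s) ^ k • expUnit A s) * adIter A B k) := by
    rw [mul_sub, Finset.mul_sum, hleading, Finset.range_eq_Ico, Finset.sum_eq_sum_Ico_succ_bot hn]
    simp only [hterm]
    simp [adIter, sub_sub]
  rwa [← hexpand, CStarRing.norm_mem_unitary_mul _ (hA.expUnit_mem_unitary s)]

end Expansion

theorem pow_le_one_add_pow {x : ℝ} (hx : 0 ≤ x) {k n : ℕ} (hkn : k ≤ n) : x ^ k ≤ 1 + x ^ n := by
  rcases le_total x 1 with hx1 | hx1
  · linarith [pow_le_one₀ hx hx1 (n := k), pow_nonneg hx n]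
  · linarith [pow_le_pow_right₀ hx1 hkn]

theorem MeasureTheory.Integrable.mul_abs_pow_of_le {μ : Measure ℝ} {f : ℝ → ℝ} {k n : ℕ}
    (hf : Integrable (fun s => f s * (1 + |s| ^ n)) μ) (hkn : k ≤ n) :
    Integrable (fun s => f s * |s| ^ k) μ := by
  have hpos (s : ℝ) : 0 < 1 + |s| ^ n := by positivity
  have hw : Continuous fun s : ℝ => |s| ^ k / (1 + |s| ^ n) :=
    (continuous_abs.pow k).div (continuous_const.add (continuous_abs.pow n)) fun s => (hpos s).ne'
  refine (hf.bdd_mul hw.aestronglyMeasurable (c := 1) (ae_of_all _ fun s => ?_)).congr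
    (ae_of_all _ fun s => ?_)
  · rw [Real.norm_of_nonneg (by positivity), div_le_one (hpos s)]
    exact pow_le_one_add_pow (abs_nonneg s) hkn
  · field_simp [(hpos s).ne']

theorem commutator_integral_sub_sum_eq_integral {α R 𝕜 : Type*} [MeasurableSpace α]
    {μ : Measure α} [NormedRing R] [NormedSpace ℝ R] [IsScalarTower ℝ R R] [SMulCommClass ℝ R R]
    [NontriviallyNormedField 𝕜] [NormedSpace 𝕜 R] [SMulCommClass ℝ 𝕜 R]
    (B : R) {F : α → R} {G : ℕ → α → R}
    (c : ℕ → 𝕜) (X : ℕ → R) (s : Finset ℕ) (hF : Integrable F μ)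
    (hG : ∀ k ∈ s, Integrable (G k) μ) :
    B * (∫ x, F x ∂μ) - (∫ x, F x ∂μ) * B - ∑ k ∈ s, c k • ((∫ x, G k x ∂μ) * X k) =
      ∫ x, B * F x - F x * B - ∑ k ∈ s, c k • (G k x * X k) ∂μ := by
  have hGX (k : ℕ) (hk : k ∈ s) : Integrable (fun x => c k • (G k x * X k)) μ :=
    ((hG k hk).mul_const (X k)).smul (c k)
  have hcomm : Integrable (fun x => B * F x - F x * B) μ := (hF.const_mul B).sub (hF.mul_const B)
  rw [integral_sub hcomm (integrable_finsetSum s hGX),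
    integral_sub (hF.const_mul B) (hF.mul_const B), integral_finsetSum s hGX,
    integral_const_mul_of_integrable hF, integral_mul_const_of_integrable hF]
  refine congrArg _ (Finset.sum_congr rfl fun k hk => ?_)
  rw [integral_smul, integral_mul_const_of_integrable (hG k hk)]

section SpectralIntegral

variable {H : Type*} [NormedAddCommGroup H] [InnerProductSpace ℂ H] [CompleteSpace H]
  {A : H →L[ℂ] H} {g : ℝ → ℂ} {n : ℕ}

theorem IsSelfAdjoint.norm_commutator_smul_expUnit_sub_sum_le (hA : IsSelfAdjoint A)
    (B : H →L[ℂ] H) (hn : 1 ≤ n) (c : ℂ) (s : ℝ) :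
    ‖B * (c • expUnit A s) - (c • expUnit A s) * B - ∑ k ∈ Finset.Ico 1 n,
        (k ! : ℂ)⁻¹ • ((((I * s) ^ k * c) • expUnit A s) * adIter A B k)‖ ≤
      (n ! : ℝ)⁻¹ * ‖adIter A B n‖ * (‖c‖ * |s| ^ n) := by
  have hfactor : B * (c • expUnit A s) - (c • expUnit A s) * B - ∑ k ∈ Finset.Ico 1 n,
      (k ! : ℂ)⁻¹ • ((((I * s) ^ k * c) • expUnit A s) * adIter A B k) =
      c • (B * expUnit A s - expUnit A s * B - ∑ k ∈ Finset.Ico 1 n,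
        (k ! : ℂ)⁻¹ • (((I * s) ^ k • expUnit A s) * adIter A B k)) := by
    simp only [smul_sub, Finset.smul_sum, mul_smul_comm, smul_mul_assoc, mul_comm _ c, mul_smul,
      smul_comm c]
  rw [hfactor, norm_smul]
  calc ‖c‖ * ‖_‖ ≤ ‖c‖ * (‖adIter A B n‖ * |s| ^ n / n !) :=
        mul_le_mul_of_nonneg_left (hA.norm_commutator_expUnit_sub_sum_le B hn s) (norm_nonneg c)
    _ = (n ! : ℝ)⁻¹ * ‖adIter A B n‖ * (‖c‖ * |s| ^ n) := by ring

theorem IsSelfAdjoint.integrable_pow_mul_smul_expUnit (hA : IsSelfAdjoint A)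
    (hF : AEStronglyMeasurable (fun s => g s • expUnit A s))
    (hg : Integrable fun s => ‖g s‖ * (1 + |s| ^ n)) {k : ℕ} (hkn : k ≤ n) :
    Integrable fun s : ℝ => ((I * s) ^ k * g s) • expUnit A s := by
  have hmeas : AEStronglyMeasurable fun s : ℝ => ((I * s) ^ k * g s) • expUnit A s := by
    simp only [mul_smul]
    exact (by fun_prop : Continuous fun s : ℝ => (I * s) ^ k).aestronglyMeasurable.smul hF
  refine (hg.mul_abs_pow_of_le hkn).mono' hmeas (ae_of_all _ fun s => ?_)
  rw [norm_smul, norm_mul, norm_pow, norm_mul, Complex.norm_I, one_mul, Complex.norm_real,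
    Real.norm_eq_abs, mul_comm (|s| ^ k)]
  exact mul_le_of_le_one_right (by positivity) (hA.norm_expUnit_le_one s)

theorem integral_pow_mul_smul_expUnit_of_not_aestronglyMeasurable (A : H →L[ℂ] H)
    (hF : ¬AEStronglyMeasurable (fun s => g s • expUnit A s)) (k : ℕ) :
    ∫ s : ℝ, ((I * s) ^ k * g s) • expUnit A s = 0 := by
  refine integral_undef fun hint => hF ?_
  have hne : ∀ᵐ s : ℝ, (I * s) ^ k ≠ 0 := by
    filter_upwards [compl_mem_ae_iff.2 (measure_singleton (0 : ℝ))] with s hs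
    exact pow_ne_zero k (mul_ne_zero Complex.I_ne_zero (Complex.ofReal_ne_zero.2 hs))
  refine (aestronglyMeasurable_smul_iff₀ ?_ hne).1 ?_
  · exact (by fun_prop : Continuous fun s : ℝ => (I * s) ^ k).aestronglyMeasurable
  · simpa only [mul_smul] using hint.aestronglyMeasurable

end SpectralIntegral

/-- Commutator expansion with remainder bound (bounded operator version):
`[B, T] = Σ_{k=1}^{n−1} (1/k!)·T_k ∘ ad_A^k(B) + R_n` with
`‖R_n‖ ≤ (1/n!)·‖ad_A^n(B)‖·∫|g(s)||s|ⁿ ds`, where `T = ∫ g(s)e^{isA} ds` and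
`T_k = ∫ g(s)(is)^k e^{isA} ds`. -/
theorem commutator_expansion_bounded
    {H : Type*} [NormedAddCommGroup H] [InnerProductSpace ℂ H] [CompleteSpace H]
    (A B : H →L[ℂ] H) (hA : IsSelfAdjoint A)
    (n : ℕ) (hn : 1 ≤ n) (g : ℝ → ℂ)
    (hg : Integrable fun s : ℝ => ‖g s‖ * (1 + |s| ^ n)) :
    ∃ Rn : H →L[ℂ] H,
      B * (∫ s : ℝ, g s • expUnit A s) - (∫ s : ℝ, g s • expUnit A s) * B =
        (∑ k ∈ Finset.Ico 1 n, ((k.factorial : ℂ))⁻¹ •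
          ((∫ s : ℝ, ((Complex.I * (s : ℂ)) ^ k * g s) • expUnit A s) * adIter A B k)) + Rn ∧
      ‖Rn‖ ≤ ((n.factorial : ℝ))⁻¹ * ‖adIter A B n‖ * ∫ s : ℝ, ‖g s‖ * |s| ^ n := by
  refine ⟨_, (add_sub_cancel _ _).symm, ?_⟩
  by_cases hF : AEStronglyMeasurable fun s : ℝ => g s • expUnit A s
  · have hT : Integrable fun s : ℝ => g s • expUnit A s := by
      simpa using hA.integrable_pow_mul_smul_expUnit hF hg (Nat.zero_le n)
    have hTk (k : ℕ) (hk : k ∈ Finset.Ico 1 n) :=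
      hA.integrable_pow_mul_smul_expUnit hF hg (Finset.mem_Ico.1 hk).2.le
    rw [commutator_integral_sub_sum_eq_integral B _ _ _ hT hTk, ← integral_const_mul]
    exact norm_integral_le_of_norm_le ((hg.mul_abs_pow_of_le le_rfl).const_mul _)
      (ae_of_all _ (fun s => hA.norm_commutator_smul_expUnit_sub_sum_le B hn (g s) s))
  · have hT : ∫ s : ℝ, g s • expUnit A s = 0 := integral_undef fun h => hF h.aestronglyMeasurable
    simp only [hT, integral_pow_mul_smul_expUnit_of_not_aestronglyMeasurable A hF, zero_mul,
      mul_zero, smul_zero, sub_self, Finset.sum_const_zero, norm_zero]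
    positivity
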